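/- Suppose ρ¹(x,t) is the entropy solution of Burgers' equation ρ_t + ρ ρ_x = 0 given by the Hopf–Lax formula with initial data ξ¹, and ρ² is the solution with initial data ξ²(x) = ξ¹(x) + c x for a constant c with 1 + c t > 0. Then for t > 0, ρ²(x,t) = (1/(1+ct)) [ ρ¹( x/(1+ct), t/(1+ct) ) + c x ]. -/
import Mathlib


/-- `y` is the rightmost minimizer of `z ↦ Ξ z + (x−z)²/(2t)`, where `Ξ` is the
cumulative initial datum `Ξ(y) = ∫_{-∞}^y ξ`. -/
def IsRightmostMinimizer (Ξ : ℝ → ℝ) (x t y : ℝ) : Prop :=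
  (∀ z : ℝ, Ξ y + (x - y)^2 / (2*t) ≤ Ξ z + (x - z)^2 / (2*t)) ∧
    ∀ z : ℝ, Ξ z + (x - z)^2 / (2*t) = Ξ y + (x - y)^2 / (2*t) → z ≤ y

/-- Tilting the initial data of Burgers' equation by `c x` transforms the entropy
solution given by the Hopf–Lax formula according to
`ρ²(x,t) = (1/(1+ct)) [ρ¹(x/(1+ct), t/(1+ct)) + c x]`. -/
theorem burgers_tilted (Ξ₁ Ξ₂ : ℝ → ℝ) (c : ℝ)
    (hΞ : ∀ y : ℝ, Ξ₂ y = Ξ₁ y + c * y^2 / 2)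
    (y₁ y₂ : ℝ → ℝ → ℝ)
    (hy₁ : ∀ x : ℝ, ∀ t : ℝ, 0 < t → IsRightmostMinimizer Ξ₁ x t (y₁ x t))
    (hy₂ : ∀ x : ℝ, ∀ t : ℝ, 0 < t → IsRightmostMinimizer Ξ₂ x t (y₂ x t))
    (ρ₁ ρ₂ : ℝ → ℝ → ℝ)
    (hρ₁ : ∀ x t, ρ₁ x t = (x - y₁ x t) / t)
    (hρ₂ : ∀ x t, ρ₂ x t = (x - y₂ x t) / t)
    (t : ℝ) (ht : 0 < t) (hct : 0 < 1 + c * t) (x : ℝ) :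
    ρ₂ x t = (1 / (1 + c*t)) * (ρ₁ (x / (1 + c*t)) (t / (1 + c*t)) + c * x) := by
  have ht0 : t ≠ 0 := ne_of_gt ht
  have hct0 : (1 + c * t) ≠ 0 := ne_of_gt hct
  set x' : ℝ := x / (1 + c * t) with hx'
  set t' : ℝ := t / (1 + c * t) with ht'
  have ht'pos : 0 < t' := div_pos ht hct
  have ht'0 : t' ≠ 0 := ne_of_gt ht'pos
  -- the two functionals differ by a constant in z
  have key : ∀ z : ℝ, Ξ₂ z + (x - z)^2 / (2*t)
      = (Ξ₁ z + (x' - z)^2 / (2*t')) + (x^2/(2*t) - x'^2/(2*t')) := by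
    intro z
    rw [hΞ, hx', ht']
    field_simp
    ring
  obtain ⟨h1min, h1max⟩ := hy₁ x' t' ht'pos
  obtain ⟨h2min, h2max⟩ := hy₂ x t ht
  set A := y₁ x' t'
  set B := y₂ x t
  -- equality of the two values for functional 2
  have hval : Ξ₂ A + (x - A)^2 / (2*t) = Ξ₂ B + (x - B)^2 / (2*t) := by
    refine le_antisymm ?_ (h2min A)
    rw [key A, key B]
    have := h1min B
    linarith
  -- equality of the two values for functional 1
  have hval1 : Ξ₁ B + (x' - B)^2 / (2*t') = Ξ₁ A + (x' - A)^2 / (2*t') := by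
    have hA := key A
    have hB := key B
    linarith
  have hAB : A = B := le_antisymm (h2max A hval) (h1max B hval1)
  rw [hρ₂, hρ₁, show y₂ x t = y₁ x' t' from hAB.symm]
  rw [hx', ht']
  field_simp
  ring
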